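/- arXiv:gr-qc/9907103 — 7 statements merged into one kernel-verified Lean document; each statement's English description precedes it below -/
import Mathlib

section
/- Let a(τ) be a positive differentiable function satisfying the dust Friedmann evolution equation 2(ä/a) + (ȧ/a)² + k/a² = 0 on an interval where ȧ ≠ 0, and let g(τ) be a given continuous function. Then for any antiderivative F of g/(a·ȧ²) and any constant c, the function f(τ) = a²·ȧ·((1/2)·F(τ) + c) satisfies the linear ODE g = (k/a² − 3(ȧ/a)²)·f + 2(ȧ/a)·ḟ. -/
open Real Set

/-!
Write `f = a²ȧ · h`. Differentiating and eliminating `ä` with the Friedmann equation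
`2aä = -(ȧ² + k)` gives `(a²ȧ)˙ = a(3ȧ² − k)/2`, so `a²ȧ` solves the homogeneous equation
and the operator `f ↦ (k/a² − 3(ȧ/a)²) f + 2(ȧ/a) ḟ` sends `a²ȧ · h` to `2aȧ² ḣ`
(reduction of order). For `h = F/2 + c` we have `ḣ = g/(2aȧ²)`, so the result is `g`.
-/

section Friedmann

variable {k x a'' : ℝ} {a a' : ℝ → ℝ}

theorem hasDerivAt_sq_mul_of_friedmann (ha : HasDerivAt a (a' x) x) (ha' : HasDerivAt a' a'' x)
    (hax : a x ≠ 0) (hfried : 2 * (a'' / a x) + (a' x / a x) ^ 2 + k / a x ^ 2 = 0) :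
    HasDerivAt (fun s => a s ^ 2 * a' s) (a x * (3 * a' x ^ 2 - k) / 2) x := by
  have hfried' : 2 * a x * a'' = -(a' x ^ 2 + k) := by
    field_simp at hfried
    linear_combination hfried
  refine ((ha.fun_pow 2).fun_mul ha').congr_deriv ?_
  linear_combination a x / 2 * hfried'

theorem friedmann_operator_sq_mul_eq {h : ℝ → ℝ} {h' : ℝ} (ha : HasDerivAt a (a' x) x)
    (ha' : HasDerivAt a' a'' x) (hax : a x ≠ 0)
    (hfried : 2 * (a'' / a x) + (a' x / a x) ^ 2 + k / a x ^ 2 = 0) (hh : HasDerivAt h h' x) :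
    (k / a x ^ 2 - 3 * (a' x / a x) ^ 2) * (a x ^ 2 * a' x * h x)
        + 2 * (a' x / a x) * deriv (fun s => a s ^ 2 * a' s * h s) x
      = 2 * a x * a' x ^ 2 * h' := by
  rw [((hasDerivAt_sq_mul_of_friedmann ha ha' hax hfried).fun_mul hh).deriv]
  field_simp
  ring

end Friedmann

theorem volume_variation_ode_solution_general
    (k c t₁ t₂ : ℝ) (a a' a'' g F : ℝ → ℝ)
    (ha' : ∀ τ ∈ Ioo t₁ t₂, HasDerivAt a (a' τ) τ)
    (ha'' : ∀ τ ∈ Ioo t₁ t₂, HasDerivAt a' (a'' τ) τ)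
    (hpos : ∀ τ ∈ Ioo t₁ t₂, 0 < a τ)
    (hne : ∀ τ ∈ Ioo t₁ t₂, a' τ ≠ 0)
    (hfried : ∀ τ ∈ Ioo t₁ t₂,
      2 * (a'' τ / a τ) + (a' τ / a τ) ^ 2 + k / (a τ) ^ 2 = 0)
    (hF : ∀ τ ∈ Ioo t₁ t₂, HasDerivAt F (g τ / (a τ * (a' τ) ^ 2)) τ) :
    ∀ τ ∈ Ioo t₁ t₂,
      g τ = (k / (a τ) ^ 2 - 3 * (a' τ / a τ) ^ 2)
              * ((a τ) ^ 2 * a' τ * (F τ / 2 + c))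
            + 2 * (a' τ / a τ)
              * deriv (fun s => (a s) ^ 2 * a' s * (F s / 2 + c)) τ := by
  intro τ hτ
  rw [friedmann_operator_sq_mul_eq (ha' τ hτ) (ha'' τ hτ) (hpos τ hτ).ne' (hfried τ hτ)
    (((hF τ hτ).div_const 2).add_const c)]
  field_simp [hne τ hτ, (hpos τ hτ).ne']

/-- For dust FLRW background `a` satisfying the Friedmann evolution
equation on an interval with `ȧ ≠ 0`, and `F` an antiderivative of `g/(a ȧ²)`,
the function `f = a²ȧ (F/2 + c)` solves `g = (k/a² − 3(ȧ/a)²) f + 2(ȧ/a) ḟ`. -/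
theorem volume_variation_ode_solution
    (k c t₁ t₂ : ℝ) (a a' a'' g F : ℝ → ℝ)
    (ha' : ∀ τ ∈ Ioo t₁ t₂, HasDerivAt a (a' τ) τ)
    (ha'' : ∀ τ ∈ Ioo t₁ t₂, HasDerivAt a' (a'' τ) τ)
    (hpos : ∀ τ ∈ Ioo t₁ t₂, 0 < a τ)
    (hne : ∀ τ ∈ Ioo t₁ t₂, a' τ ≠ 0)
    (hfried : ∀ τ ∈ Ioo t₁ t₂,
      2 * (a'' τ / a τ) + (a' τ / a τ) ^ 2 + k / (a τ) ^ 2 = 0)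
    (hg : ContinuousOn g (Ioo t₁ t₂))
    (hF : ∀ τ ∈ Ioo t₁ t₂, HasDerivAt F (g τ / (a τ * (a' τ) ^ 2)) τ) :
    ∀ τ ∈ Ioo t₁ t₂,
      g τ = (k / (a τ) ^ 2 - 3 * (a' τ / a τ) ^ 2)
              * ((a τ) ^ 2 * a' τ * (F τ / 2 + c))
            + 2 * (a' τ / a τ)
              * deriv (fun s => (a s) ^ 2 * a' s * (F s / 2 + c)) τ :=
  volume_variation_ode_solution_general k c t₁ t₂ a a' a'' g F ha' ha'' hpos hne hfried hF
end

section
/- Let a(τ) be a positive twice-differentiable function with ȧ ≠ 0 satisfying 2(ä/a) + (ȧ/a)² + k/a² = 0. Then every solution f of the homogeneous linear ODE 0 = (k/a² − 3(ȧ/a)²)·f + 2(ȧ/a)·ḟ on an interval is of the form f = c·a²·ȧ for some constant c. -/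
open Set

/-! The Friedmann equation `2aä + ȧ² + k = 0` turns the equation into the vanishing of the Wronskian
`ḟ w - f ẇ` of `f` and `w = a²ȧ`; since `w` does not vanish, `f / w` is constant on the interval. -/

theorem IsOpen.exists_eq_const_mul_of_hasDerivAt_of_wronskian_eq_zero {𝕜 : Type*} [RCLike 𝕜]
    {s : Set 𝕜} (hs : IsOpen s) (hs' : IsPreconnected s) {f f' w w' : 𝕜 → 𝕜}
    (hf : ∀ x ∈ s, HasDerivAt f (f' x) x) (hw : ∀ x ∈ s, HasDerivAt w (w' x) x)
    (hw0 : ∀ x ∈ s, w x ≠ 0) (hwronskian : ∀ x ∈ s, f' x * w x - f x * w' x = 0) :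
    ∃ c, ∀ x ∈ s, f x = c * w x := by
  have hquot : ∀ x ∈ s, HasDerivAt (f / w) 0 x := fun x hx => by
    simpa [hwronskian x hx] using (hf x hx).div (hw x hx) (hw0 x hx)
  obtain ⟨c, hc⟩ := hs.exists_is_const_of_deriv_eq_zero hs'
    (fun x hx => (hquot x hx).differentiableAt.differentiableWithinAt)
    (fun x hx => (hquot x hx).deriv)
  exact ⟨c, fun x hx => by rw [← hc x hx, Pi.div_apply, div_mul_cancel₀ _ (hw0 x hx)]⟩

theorem wronskian_sq_mul_eq_zero_of_friedmann {k a a' a'' f f' : ℝ}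
    (hfried : 2 * (a'' / a) + (a' / a) ^ 2 + k / a ^ 2 = 0)
    (hode : 0 = (k / a ^ 2 - 3 * (a' / a) ^ 2) * f + 2 * (a' / a) * f') :
    f' * (a ^ 2 * a') - f * (2 * a * a' * a' + a ^ 2 * a'') = 0 := by
  linear_combination (norm := skip) (-(a ^ 3 / 2)) * hode - (a ^ 3 * f / 2) * hfried
  field_simp
  ring

/-- Every solution of the homogeneous linearized equation
`0 = (k/a² − 3(ȧ/a)²) f + 2(ȧ/a) ḟ` about a dust FLRW background is
a constant multiple of `a²ȧ`. -/
theorem homogeneous_volume_variation_eq_mul_a_sq_a'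
    (k t₁ t₂ : ℝ) (a a' a'' f f' : ℝ → ℝ)
    (ha' : ∀ τ ∈ Ioo t₁ t₂, HasDerivAt a (a' τ) τ)
    (ha'' : ∀ τ ∈ Ioo t₁ t₂, HasDerivAt a' (a'' τ) τ)
    (hpos : ∀ τ ∈ Ioo t₁ t₂, 0 < a τ)
    (hne : ∀ τ ∈ Ioo t₁ t₂, a' τ ≠ 0)
    (hfried : ∀ τ ∈ Ioo t₁ t₂,
      2 * (a'' τ / a τ) + (a' τ / a τ) ^ 2 + k / (a τ) ^ 2 = 0)
    (hf : ∀ τ ∈ Ioo t₁ t₂, HasDerivAt f (f' τ) τ)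
    (hode : ∀ τ ∈ Ioo t₁ t₂,
      0 = (k / (a τ) ^ 2 - 3 * (a' τ / a τ) ^ 2) * f τ
          + 2 * (a' τ / a τ) * f' τ) :
    ∃ c : ℝ, ∀ τ ∈ Ioo t₁ t₂, f τ = c * ((a τ) ^ 2 * a' τ) := by
  have hw : ∀ τ ∈ Ioo t₁ t₂, HasDerivAt (a ^ 2 * a')
      (2 * a τ * a' τ * a' τ + a τ ^ 2 * a'' τ) τ := fun τ hτ => by
    simpa using ((ha' τ hτ).pow 2).mul (ha'' τ hτ)
  exact isOpen_Ioo.exists_eq_const_mul_of_hasDerivAt_of_wronskian_eq_zero isPreconnected_Ioo hf hw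
    (fun τ hτ => mul_ne_zero (pow_ne_zero 2 (hpos τ hτ).ne') (hne τ hτ))
    (fun τ hτ => wronskian_sq_mul_eq_zero_of_friedmann (hfried τ hτ) (hode τ hτ))
end

section
/- For the closed case parametrized by a(η) = a₀(1 − cos η), τ − τ_c = a₀(η − sin η), the function δV = a₀²(1 − cos η)(A(η)·δE/2 + sin η·δC), where A(η) = 2(1 − cos η) − η sin η, satisfies (as a function of τ) the equation δE = (1/a² − 3(ȧ/a)²)·δV + 2(ȧ/a)·δV̇ for all constants δE, δC. -/
/-!
In conformal time `η` one has `dτ = a dη`, so `ḟ = f' / a`. Writing `u = 1 - cos η`, `a = a₀ u` and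
`δV = a₀² u G(η)`, and using `u² - sin² η = -2 u cos η`, the equation for `δV` becomes
`sin η · G' - cos η · G = δE u² / 2`: `sin η` solves its homogeneous part and `A / 2` is a
particular solution. That `η` is differentiable in `τ`, with `dη/dτ = 1 / a`, is the inverse
function theorem for the increasing bijection `x ↦ x - sin x`, whose derivative `u` is nonzero
because `sin η ≠ 0`.
-/

open Real Set Filter Topology

theorem strictMono_id_sub_sin : StrictMono fun x : ℝ => x - sin x := by
  intro x y hxy
  have hhalf : |sin ((y - x) / 2)| < (y - x) / 2 := by
    simpa [abs_of_pos (half_pos (sub_pos.2 hxy))] using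
      abs_sin_lt_abs (half_pos (sub_pos.2 hxy)).ne'
  have hsin : sin y - sin x < y - x := by
    rw [sin_sub_sin]
    calc 2 * sin ((y - x) / 2) * cos ((y + x) / 2)
        ≤ 2 * |sin ((y - x) / 2)| := by
          rw [mul_assoc]
          gcongr
          exact (le_abs_self _).trans (by
            rw [abs_mul]
            exact mul_le_of_le_one_right (abs_nonneg _) (abs_cos_le_one _))
      _ < y - x := by linarith
  simp only
  linarith

theorem surjective_id_sub_sin : Function.Surjective fun x : ℝ => x - sin x :=
  Continuous.surjective (f := fun x : ℝ => x - sin x) (by fun_prop)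
    (tendsto_atTop_mono (fun x => by simp only [id]; linarith [sin_le_one x])
      (tendsto_atTop_add_const_right _ (-1) tendsto_id))
    (tendsto_atBot_mono (fun x => by simp only [id]; linarith [neg_one_le_sin x])
      (tendsto_atBot_add_const_right _ 1 tendsto_id))

noncomputable def idSubSinOrderIso : ℝ ≃o ℝ :=
  strictMono_id_sub_sin.orderIsoOfSurjective _ surjective_id_sub_sin

theorem hasDerivAt_of_eventually_cycloid {η : ℝ → ℝ} {a₀ τc τ₀ : ℝ} (ha₀ : a₀ ≠ 0)
    (hrel : ∀ᶠ τ in 𝓝 τ₀, τ - τc = a₀ * (η τ - sin (η τ))) (hcos : cos (η τ₀) ≠ 1) :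
    HasDerivAt η (a₀ * (1 - cos (η τ₀)))⁻¹ τ₀ := by
  have hη : η =ᶠ[𝓝 τ₀] fun τ => idSubSinOrderIso.symm ((τ - τc) / a₀) := by
    filter_upwards [hrel] with τ hτ
    rw [hτ, mul_div_cancel_left₀ _ ha₀]
    exact (idSubSinOrderIso.symm_apply_apply (η τ)).symm
  have hcont : ContinuousAt η τ₀ :=
    ((idSubSinOrderIso.symm.continuous.comp (by fun_prop)).continuousAt).congr hη.symm
  have hcycloid : HasDerivAt (fun x => τc + a₀ * (x - sin x)) (a₀ * (1 - cos (η τ₀))) (η τ₀) :=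
    (((hasDerivAt_id _).sub (hasDerivAt_sin _)).const_mul a₀).const_add τc
  refine HasDerivAt.of_local_left_inverse hcont hcycloid
    (mul_ne_zero ha₀ (sub_ne_zero.2 hcos.symm)) ?_
  filter_upwards [hrel] with τ hτ
  linarith

theorem hasDerivAt_one_sub_cos (x : ℝ) : HasDerivAt (fun x => 1 - cos x) (sin x) x := by
  simpa using (hasDerivAt_cos x).const_sub 1

theorem deriv_eq_of_eventuallyEq_comp {g f η : ℝ → ℝ} {τ₀ f' η' : ℝ} (hg : g =ᶠ[𝓝 τ₀] f ∘ η)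
    (hf : HasDerivAt f f' (η τ₀)) (hη : HasDerivAt η η' τ₀) : deriv g τ₀ = f' * η' :=
  hg.deriv_eq.trans (hf.comp τ₀ hη).deriv

/-- The factor `G` in `δV = a₀² (1 - cos η) G(η)`. -/
noncomputable def volumeProfile (δE δC x : ℝ) : ℝ :=
  (2 * (1 - cos x) - x * sin x) * δE / 2 + sin x * δC

theorem hasDerivAt_volumeProfile (δE δC x : ℝ) :
    HasDerivAt (volumeProfile δE δC) ((sin x - x * cos x) * δE / 2 + cos x * δC) x := by
  have h := ((((hasDerivAt_one_sub_cos x).const_mul 2).sub ((hasDerivAt_id' x).mul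
    (hasDerivAt_sin x))).mul_const δE).div_const 2 |>.add ((hasDerivAt_sin x).mul_const δC)
  exact h.congr_deriv (by ring)

theorem sin_mul_deriv_sub_cos_mul_volumeProfile (δE δC x : ℝ) :
    sin x * ((sin x - x * cos x) * δE / 2 + cos x * δC) - cos x * volumeProfile δE δC x
      = δE * (1 - cos x) ^ 2 / 2 := by
  unfold volumeProfile
  linear_combination δE / 2 * sin_sq_add_cos_sq x

theorem first_variation_eq_of_conformal_eq {a₀ s c G G' E : ℝ} (ha₀ : a₀ ≠ 0) (hc : c ≠ 1)
    (hpy : s ^ 2 + c ^ 2 = 1) (hconf : s * G' - c * G = E * (1 - c) ^ 2 / 2) :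
    E = (1 / (a₀ * (1 - c)) ^ 2 - 3 * (a₀ * s * (a₀ * (1 - c))⁻¹ / (a₀ * (1 - c))) ^ 2)
          * (a₀ ^ 2 * (1 - c) * G)
        + 2 * (a₀ * s * (a₀ * (1 - c))⁻¹ / (a₀ * (1 - c)))
          * ((a₀ ^ 2 * s * G + a₀ ^ 2 * (1 - c) * G') * (a₀ * (1 - c))⁻¹) := by
  have hu : 1 - c ≠ 0 := sub_ne_zero.2 hc.symm
  field_simp
  linear_combination -2 * (1 - c) * hconf + G * hpy

theorem closed_first_variation_of_volume_general
    (a₀ τc t₁ t₂ δE δC : ℝ) (ha₀ : 0 < a₀) (η a V : ℝ → ℝ)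
    (hsin : ∀ τ ∈ Ioo t₁ t₂, Real.sin (η τ) ≠ 0)
    (hrel : ∀ τ ∈ Ioo t₁ t₂, τ - τc = a₀ * (η τ - Real.sin (η τ)))
    (ha : ∀ τ ∈ Ioo t₁ t₂, a τ = a₀ * (1 - Real.cos (η τ)))
    (hV : ∀ τ ∈ Ioo t₁ t₂,
      V τ = a₀ ^ 2 * (1 - Real.cos (η τ))
        * ((2 * (1 - Real.cos (η τ)) - η τ * Real.sin (η τ)) * δE / 2
           + Real.sin (η τ) * δC)) :
    ∀ τ ∈ Ioo t₁ t₂,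
      δE = (1 / (a τ) ^ 2 - 3 * (deriv a τ / a τ) ^ 2) * V τ
           + 2 * (deriv a τ / a τ) * deriv V τ := by
  intro τ₀ hτ₀
  set x := η τ₀
  have hnhds : Ioo t₁ t₂ ∈ 𝓝 τ₀ := isOpen_Ioo.mem_nhds hτ₀
  have hcos : cos x ≠ 1 := fun h => hsin τ₀ hτ₀ (sin_eq_zero_iff_cos_eq.2 (Or.inl h))
  have hη := hasDerivAt_of_eventually_cycloid ha₀.ne' (eventually_of_mem hnhds hrel) hcos
  have hda : deriv a τ₀ = a₀ * sin x * (a₀ * (1 - cos x))⁻¹ :=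
    deriv_eq_of_eventuallyEq_comp (f := fun x => a₀ * (1 - cos x)) (eventually_of_mem hnhds ha)
      ((hasDerivAt_one_sub_cos x).const_mul a₀) hη
  have hdV : deriv V τ₀ = (a₀ ^ 2 * sin x * volumeProfile δE δC x + a₀ ^ 2 * (1 - cos x)
      * ((sin x - x * cos x) * δE / 2 + cos x * δC)) * (a₀ * (1 - cos x))⁻¹ :=
    deriv_eq_of_eventuallyEq_comp (f := fun x => a₀ ^ 2 * (1 - cos x) * volumeProfile δE δC x)
      (eventually_of_mem hnhds hV)
      (((hasDerivAt_one_sub_cos x).const_mul (a₀ ^ 2)).mul (hasDerivAt_volumeProfile δE δC x)) hη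
  rw [ha τ₀ hτ₀, hV τ₀ hτ₀, hda, hdV]
  exact first_variation_eq_of_conformal_eq ha₀.ne' hcos (sin_sq_add_cos_sq x)
    (sin_mul_deriv_sub_cos_mul_volumeProfile δE δC x)

/-- For the closed (`k = 1`) dust FLRW solution parametrized by
`a = a₀(1 − cos η)`, `τ − τ_c = a₀(η − sin η)`, the function
`δV = a₀²(1 − cos η)(A(η) δE/2 + sin η δC)` with
`A(η) = 2(1 − cos η) − η sin η` satisfies, as a function of `τ`,
`δE = (1/a² − 3(ȧ/a)²) δV + 2(ȧ/a) δV̇` for all constants `δE, δC`. -/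
theorem closed_first_variation_of_volume
    (a₀ τc t₁ t₂ δE δC : ℝ) (ha₀ : 0 < a₀) (η a V : ℝ → ℝ)
    (hrange : ∀ τ ∈ Ioo t₁ t₂, η τ ∈ Ioo 0 (2 * π))
    (hsin : ∀ τ ∈ Ioo t₁ t₂, Real.sin (η τ) ≠ 0)
    (hrel : ∀ τ ∈ Ioo t₁ t₂, τ - τc = a₀ * (η τ - Real.sin (η τ)))
    (ha : ∀ τ ∈ Ioo t₁ t₂, a τ = a₀ * (1 - Real.cos (η τ)))
    (hV : ∀ τ ∈ Ioo t₁ t₂,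
      V τ = a₀ ^ 2 * (1 - Real.cos (η τ))
        * ((2 * (1 - Real.cos (η τ)) - η τ * Real.sin (η τ)) * δE / 2
           + Real.sin (η τ) * δC)) :
    ∀ τ ∈ Ioo t₁ t₂,
      δE = (1 / (a τ) ^ 2 - 3 * (deriv a τ / a τ) ^ 2) * V τ
           + 2 * (deriv a τ / a τ) * deriv V τ :=
  closed_first_variation_of_volume_general a₀ τc t₁ t₂ δE δC ha₀ η a V hsin hrel ha hV
end

section
/- For the open case parametrized by a(η) = a₀(cosh η − 1), τ − τ_c = a₀(sinh η − η), η > 0, the function δV = a₀²(cosh η − 1)(A₋(η)·δE/2 + sinh η·δC), where A₋(η) = η sinh η − 2(cosh η − 1), satisfies (as a function of τ) δE = (−1/a² − 3(ȧ/a)²)·δV + 2(ȧ/a)·δV̇ for all constants δE, δC. -/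
/-!
The development angle `η` is the inverse of the strictly increasing time function
`τ(η) = τ_c + a₀ (sinh η - η)`, whose derivative `a₀ (cosh η - 1)` is the scale factor `a`.
Hence `dη/dτ = 1/a`, so `ȧ = a'/a` and `V̇ = V'/a` with `'` denoting `d/dη`, and the claimed
equation becomes an identity in `η`; after clearing denominators it reduces to
`cosh² η - sinh² η = 1`.
-/

open Real Set Filter Topology Function

/-- No continuity of `g` is needed: injectivity of `f` makes `g` a local left inverse of `f`. -/
theorem HasStrictDerivAt.to_local_right_inverse_of_injective {𝕜 : Type*}
    [NontriviallyNormedField 𝕜] [CompleteSpace 𝕜] {f g : 𝕜 → 𝕜} {f' y : 𝕜}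
    (hf : HasStrictDerivAt f f' (g y)) (hf' : f' ≠ 0) (hinj : Injective f)
    (hfg : ∀ᶠ z in 𝓝 y, f (g z) = z) : HasStrictDerivAt g f'⁻¹ y := by
  have hfgy : f (g y) = y := hfg.self_of_nhds
  have hleft : ∀ᶠ x in 𝓝 (g y), g (f x) = x := by
    have hcont : Tendsto f (𝓝 (g y)) (𝓝 y) := by
      simpa only [hfgy] using hf.hasDerivAt.continuousAt.tendsto
    filter_upwards [hcont.eventually hfg] with x hx using hinj hx
  simpa [hfgy] using hf.to_local_left_inverse hf' hleft

noncomputable section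

namespace OpenDust

variable (a₀ τc δE δC : ℝ)

def time (x : ℝ) : ℝ := τc + a₀ * (sinh x - x)

def scaleFactor (x : ℝ) : ℝ := a₀ * (cosh x - 1)

def volumeVariation (x : ℝ) : ℝ :=
  a₀ ^ 2 * (cosh x - 1) * ((x * sinh x - 2 * (cosh x - 1)) * δE / 2 + sinh x * δC)

variable {a₀}

theorem time_strictMono (ha₀ : 0 < a₀) : StrictMono (time a₀ τc) :=
  fun _ _ hxy => add_lt_add_right (mul_lt_mul_of_pos_left (sinh_sub_id_strictMono hxy) ha₀) τc

theorem hasStrictDerivAt_time (x : ℝ) : HasStrictDerivAt (time a₀ τc) (scaleFactor a₀ x) x :=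
  (((hasStrictDerivAt_sinh x).sub (hasStrictDerivAt_id x)).const_mul a₀).const_add τc

theorem scaleFactor_ne_zero (ha₀ : a₀ ≠ 0) {x : ℝ} (hx : x ≠ 0) : scaleFactor a₀ x ≠ 0 :=
  mul_ne_zero ha₀ (sub_ne_zero.mpr (one_lt_cosh.mpr hx).ne')

theorem hasDerivAt_scaleFactor (x : ℝ) : HasDerivAt (scaleFactor a₀) (a₀ * sinh x) x :=
  ((hasDerivAt_cosh x).sub_const 1).const_mul a₀

theorem hasDerivAt_volumeVariation (x : ℝ) :
    HasDerivAt (volumeVariation a₀ δE δC)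
      (a₀ ^ 2 * (sinh x * ((x * sinh x - 2 * (cosh x - 1)) * δE / 2 + sinh x * δC)
        + (cosh x - 1) * ((x * cosh x - sinh x) * δE / 2 + cosh x * δC))) x := by
  have hcosh := (hasDerivAt_cosh x).sub_const 1
  have hsinh := hasDerivAt_sinh x
  have hA := ((((hasDerivAt_id' x).mul hsinh).sub (hcosh.const_mul 2)).mul_const δE).div_const 2
  exact ((hcosh.const_mul (a₀ ^ 2)).mul (hA.add (hsinh.mul_const δC))).congr_deriv
    (by simp only [Pi.add_apply, Pi.sub_apply, Pi.mul_apply]; ring)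

/-- The first-variation equation in the variable `η`, with `ȧ = a'/a` and `V̇ = V'/a`. -/
theorem first_variation_identity (ha₀ : a₀ ≠ 0) {x : ℝ} (hx : x ≠ 0) :
    δE = (-1 / scaleFactor a₀ x ^ 2
          - 3 * (a₀ * sinh x * (scaleFactor a₀ x)⁻¹ / scaleFactor a₀ x) ^ 2)
          * volumeVariation a₀ δE δC x
        + 2 * (a₀ * sinh x * (scaleFactor a₀ x)⁻¹ / scaleFactor a₀ x)
          * ((a₀ ^ 2 * (sinh x * ((x * sinh x - 2 * (cosh x - 1)) * δE / 2 + sinh x * δC)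
            + (cosh x - 1) * ((x * cosh x - sinh x) * δE / 2 + cosh x * δC)))
            * (scaleFactor a₀ x)⁻¹) := by
  have hc : cosh x - 1 ≠ 0 := sub_ne_zero.mpr (one_lt_cosh.mpr hx).ne'
  have hpyth : cosh x ^ 2 = sinh x ^ 2 + 1 := cosh_sq x
  unfold scaleFactor volumeVariation
  field_simp
  linear_combination (-(x * sinh x * δE) - 2 * sinh x * δC) * hpyth

end OpenDust

end

open OpenDust in
/-- For the open (`k = −1`) dust FLRW solution parametrized by
`a = a₀(cosh η − 1)`, `τ − τ_c = a₀(sinh η − η)`, `η > 0`, the function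
`δV = a₀²(cosh η − 1)(A₋(η) δE/2 + sinh η δC)` with
`A₋(η) = η sinh η − 2(cosh η − 1)` satisfies, as a function of `τ`,
`δE = (−1/a² − 3(ȧ/a)²) δV + 2(ȧ/a) δV̇` for all constants `δE, δC`. -/
theorem open_first_variation_of_volume
    (a₀ τc t₁ t₂ δE δC : ℝ) (ha₀ : 0 < a₀) (η a V : ℝ → ℝ)
    (hrange : ∀ τ ∈ Ioo t₁ t₂, 0 < η τ)
    (hrel : ∀ τ ∈ Ioo t₁ t₂, τ - τc = a₀ * (Real.sinh (η τ) - η τ))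
    (ha : ∀ τ ∈ Ioo t₁ t₂, a τ = a₀ * (Real.cosh (η τ) - 1))
    (hV : ∀ τ ∈ Ioo t₁ t₂,
      V τ = a₀ ^ 2 * (Real.cosh (η τ) - 1)
        * ((η τ * Real.sinh (η τ) - 2 * (Real.cosh (η τ) - 1)) * δE / 2
           + Real.sinh (η τ) * δC)) :
    ∀ τ ∈ Ioo t₁ t₂,
      δE = (-1 / (a τ) ^ 2 - 3 * (deriv a τ / a τ) ^ 2) * V τ
           + 2 * (deriv a τ / a τ) * deriv V τ := by
  intro τ hτ
  have hnhds : Ioo t₁ t₂ ∈ 𝓝 τ := isOpen_Ioo.mem_nhds hτ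
  have hη0 : η τ ≠ 0 := (hrange τ hτ).ne'
  have hη : HasDerivAt η (scaleFactor a₀ (η τ))⁻¹ τ :=
    ((hasStrictDerivAt_time τc (η τ)).to_local_right_inverse_of_injective
      (scaleFactor_ne_zero ha₀.ne' hη0) (time_strictMono τc ha₀).injective
      (eventually_of_mem hnhds fun z hz => by simp only [time]; linarith [hrel z hz])).hasDerivAt
  have ha' : deriv a τ = a₀ * sinh (η τ) * (scaleFactor a₀ (η τ))⁻¹ :=
    (((hasDerivAt_scaleFactor (η τ)).comp τ hη).congr_of_eventuallyEq
      (eventually_of_mem hnhds ha)).deriv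
  have hV' := (((hasDerivAt_volumeVariation δE δC (η τ)).comp τ hη).congr_of_eventuallyEq
      (eventually_of_mem hnhds hV)).deriv
  rw [ha', hV', ha τ hτ, hV τ hτ]
  exact first_variation_identity δE δC ha₀.ne' hη0
end

section
/- Let a(τ) > 0 satisfy the Friedmann equation 2(ä/a) + (ȧ/a)² + k/a² = 0 with ȧ ≠ 0, and let Γ(τ) be continuous. Then f(τ) = a²ȧ·(δ²E/2 · F₁(τ) + c) − (a²ȧ/2)·F₂(τ), where F₁ is an antiderivative of 1/(a ȧ²) and F₂ is an antiderivative of Γ/(a ȧ²), satisfies δ²E = (k/a² − 3(ȧ/a)²)·f + 2(ȧ/a)·ḟ + Γ(τ). -/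
open Real Set

/-!
The volume equation is linear in `f`, and under the Friedmann equation `a²ȧ` solves its
homogeneous part. Writing `f = a²ȧ · h` (variation of constants), the homogeneous part drops out
and only `2(ȧ/a) · a²ȧ · ḣ` survives; with `h = δ²E/2 · F₁ + c − F₂/2` this is exactly `δ²E − Γ`.
-/

theorem variation_of_constants {p q g' h' τ : ℝ} {g h : ℝ → ℝ}
    (hg : HasDerivAt g g' τ) (hh : HasDerivAt h h' τ) (hhom : p * g τ + q * g' = 0) :
    p * (g τ * h τ) + q * deriv (fun s => g s * h s) τ = q * g τ * h' := by
  rw [(hg.fun_mul hh).deriv]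
  linear_combination h τ * hhom

theorem friedmann_volume_homogeneous {k a a' a'' : ℝ} (ha : a ≠ 0)
    (hfried : 2 * (a'' / a) + (a' / a) ^ 2 + k / a ^ 2 = 0) :
    (k / a ^ 2 - 3 * (a' / a) ^ 2) * (a ^ 2 * a') + 2 * (a' / a) * (2 * a * a' * a' + a ^ 2 * a'')
      = 0 := by
  field_simp at hfried ⊢
  linear_combination a' * hfried

theorem second_variation_ode_solution_general
    (k c δ2E t₁ t₂ : ℝ) (a a' a'' Γ F₁ F₂ : ℝ → ℝ)
    (ha' : ∀ τ ∈ Ioo t₁ t₂, HasDerivAt a (a' τ) τ)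
    (ha'' : ∀ τ ∈ Ioo t₁ t₂, HasDerivAt a' (a'' τ) τ)
    (hpos : ∀ τ ∈ Ioo t₁ t₂, 0 < a τ)
    (hne : ∀ τ ∈ Ioo t₁ t₂, a' τ ≠ 0)
    (hfried : ∀ τ ∈ Ioo t₁ t₂,
      2 * (a'' τ / a τ) + (a' τ / a τ) ^ 2 + k / (a τ) ^ 2 = 0)
    (hF₁ : ∀ τ ∈ Ioo t₁ t₂, HasDerivAt F₁ (1 / (a τ * (a' τ) ^ 2)) τ)
    (hF₂ : ∀ τ ∈ Ioo t₁ t₂, HasDerivAt F₂ (Γ τ / (a τ * (a' τ) ^ 2)) τ) :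
    ∀ τ ∈ Ioo t₁ t₂,
      δ2E = (k / (a τ) ^ 2 - 3 * (a' τ / a τ) ^ 2)
              * ((a τ) ^ 2 * a' τ * (δ2E / 2 * F₁ τ + c)
                  - (a τ) ^ 2 * a' τ / 2 * F₂ τ)
            + 2 * (a' τ / a τ)
              * deriv (fun s => (a s) ^ 2 * a' s * (δ2E / 2 * F₁ s + c)
                  - (a s) ^ 2 * a' s / 2 * F₂ s) τ
            + Γ τ := by
  intro τ hτ
  have ha0 : a τ ≠ 0 := (hpos τ hτ).ne'
  have hg : HasDerivAt (fun s => a s ^ 2 * a' s)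
      (2 * a τ * a' τ * a' τ + a τ ^ 2 * a'' τ) τ := by
    simpa [mul_comm] using ((ha' τ hτ).fun_pow 2).fun_mul (ha'' τ hτ)
  have hh : HasDerivAt (fun s => δ2E / 2 * F₁ s + c - F₂ s / 2)
      (δ2E / 2 * (1 / (a τ * a' τ ^ 2)) - Γ τ / (a τ * a' τ ^ 2) / 2) τ :=
    (((hF₁ τ hτ).const_mul _).add_const c).sub ((hF₂ τ hτ).div_const 2)
  have hsplit := variation_of_constants hg hh
    (friedmann_volume_homogeneous ha0 (hfried τ hτ))
  have hsource : 2 * (a' τ / a τ) * (a τ ^ 2 * a' τ)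
      * (δ2E / 2 * (1 / (a τ * a' τ ^ 2)) - Γ τ / (a τ * a' τ ^ 2) / 2) = δ2E - Γ τ := by
    field_simp [hne τ hτ]
  have hf : (fun s => a s ^ 2 * a' s * (δ2E / 2 * F₁ s + c) - a s ^ 2 * a' s / 2 * F₂ s)
      = fun s => a s ^ 2 * a' s * (δ2E / 2 * F₁ s + c - F₂ s / 2) := by
    funext s
    ring
  rw [hf]
  linear_combination -hsplit - hsource

/-- Second-variation equation: with `F₁` an antiderivative of
`1/(a ȧ²)` and `F₂` an antiderivative of `Γ/(a ȧ²)`, the function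
`f = a²ȧ (δ2E/2 · F₁ + c) − (a²ȧ/2) F₂` satisfies
`δ2E = (k/a² − 3(ȧ/a)²) f + 2(ȧ/a) ḟ + Γ`. -/
theorem second_variation_ode_solution
    (k c δ2E t₁ t₂ : ℝ) (a a' a'' Γ F₁ F₂ : ℝ → ℝ)
    (ha' : ∀ τ ∈ Ioo t₁ t₂, HasDerivAt a (a' τ) τ)
    (ha'' : ∀ τ ∈ Ioo t₁ t₂, HasDerivAt a' (a'' τ) τ)
    (hpos : ∀ τ ∈ Ioo t₁ t₂, 0 < a τ)
    (hne : ∀ τ ∈ Ioo t₁ t₂, a' τ ≠ 0)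
    (hfried : ∀ τ ∈ Ioo t₁ t₂,
      2 * (a'' τ / a τ) + (a' τ / a τ) ^ 2 + k / (a τ) ^ 2 = 0)
    (hΓ : ContinuousOn Γ (Ioo t₁ t₂))
    (hF₁ : ∀ τ ∈ Ioo t₁ t₂, HasDerivAt F₁ (1 / (a τ * (a' τ) ^ 2)) τ)
    (hF₂ : ∀ τ ∈ Ioo t₁ t₂, HasDerivAt F₂ (Γ τ / (a τ * (a' τ) ^ 2)) τ) :
    ∀ τ ∈ Ioo t₁ t₂,
      δ2E = (k / (a τ) ^ 2 - 3 * (a' τ / a τ) ^ 2)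
              * ((a τ) ^ 2 * a' τ * (δ2E / 2 * F₁ τ + c)
                  - (a τ) ^ 2 * a' τ / 2 * F₂ τ)
            + 2 * (a' τ / a τ)
              * deriv (fun s => (a s) ^ 2 * a' s * (δ2E / 2 * F₁ s + c)
                  - (a s) ^ 2 * a' s / 2 * F₂ s) τ
            + Γ τ :=
  second_variation_ode_solution_general k c δ2E t₁ t₂ a a' a'' Γ F₁ F₂ ha' ha'' hpos hne hfried hF₁
    hF₂
end

section
/- For the closed dust FLRW solution a(η) = a₀(1 − cos η), τ − τ_c = a₀(η − sin η), the boundary-effect mode δV_B = −(δB/2)·a₀³(1 − cos η)·(4(1 − cos η) + sin η(sin η − 3η)) satisfies, as a function of τ, the equation δE' = (1/a² − 3(ȧ/a)²)·δV_B + 2(ȧ/a)·δV̇_B with δE' = −a·δB, i.e., −a·δB = (1/a² − 3(ȧ/a)²)δV_B + 2(ȧ/a)δV̇_B. -/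
open Real Set Filter Topology

/-!
Along the cycloid `τ - τc = a₀ (η - sin η)` the conformal time `η` is a differentiable function
of `τ` with `dη/dτ = 1 / a`, by the inverse function theorem (`η ↦ η - sin η` is injective on
`(0, 2π)` with nonvanishing derivative there). Hence every `τ`-derivative is an `η`-derivative
divided by `a = a₀ (1 - cos η)`, and after clearing denominators the equation reduces to a
polynomial identity in `η`, `sin η`, `cos η` modulo `sin² η + cos² η = 1`.
-/

lemma cos_lt_one_of_mem_Ioo {x : ℝ} (hx : x ∈ Ioo 0 (2 * π)) : cos x < 1 := by
  refine (cos_le_one x).lt_of_ne fun h => hx.1.ne' ?_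
  exact (cos_eq_one_iff_of_lt_of_lt (by linarith [hx.1, pi_pos]) hx.2).1 h

lemma strictMonoOn_sub_sin : StrictMonoOn (fun x => x - sin x) (Ioo 0 (2 * π)) := by
  refine strictMonoOn_of_deriv_pos (convex_Ioo _ _) (by fun_prop) fun x hx => ?_
  rw [interior_Ioo] at hx
  have hderiv : deriv (fun x => x - sin x) x = 1 - cos x :=
    ((hasDerivAt_id x).sub (hasDerivAt_sin x)).deriv
  rw [hderiv, sub_pos]
  exact cos_lt_one_of_mem_Ioo hx

theorem HasStrictDerivAt.hasDerivAt_of_rightInvOn {f η : ℝ → ℝ} {f' τ₀ : ℝ} {U S : Set ℝ}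
    (hf : HasStrictDerivAt f f' (η τ₀)) (hf' : f' ≠ 0) (hU : U ∈ 𝓝 τ₀) (hS : S ∈ 𝓝 (η τ₀))
    (hinj : InjOn f S) (hmaps : MapsTo η U S) (hright : ∀ τ ∈ U, f (η τ) = τ) :
    HasDerivAt η f'⁻¹ τ₀ := by
  have hfU : ∀ᶠ x in 𝓝 (η τ₀), f x ∈ U :=
    hf.hasDerivAt.continuousAt.tendsto (by rwa [hright τ₀ (mem_of_mem_nhds hU)])
  have hleft : ∀ᶠ x in 𝓝 (η τ₀), η (f x) = x := by
    filter_upwards [hfU, hS] with x hxU hxS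
    exact hinj (hmaps hxU) hxS (hright _ hxU)
  simpa only [hright τ₀ (mem_of_mem_nhds hU)] using
    (hf.to_local_left_inverse hf' hleft).hasDerivAt

lemma hasStrictDerivAt_cycloid (a₀ τc x : ℝ) :
    HasStrictDerivAt (fun x => a₀ * (x - sin x) + τc) (a₀ * (1 - cos x)) x :=
  (((hasStrictDerivAt_id x).sub (hasStrictDerivAt_sin x)).const_mul a₀).add_const τc

lemma injOn_cycloid {a₀ : ℝ} (ha₀ : a₀ ≠ 0) (τc : ℝ) :
    InjOn (fun x => a₀ * (x - sin x) + τc) (Ioo 0 (2 * π)) := fun _ hx _ hy h =>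
  strictMonoOn_sub_sin.injOn hx hy (mul_left_cancel₀ ha₀ (add_right_cancel h))

lemma hasDerivAt_dustScale (a₀ x : ℝ) :
    HasDerivAt (fun x => a₀ * (1 - cos x)) (a₀ * sin x) x := by
  simpa using ((hasDerivAt_cos x).const_sub 1).const_mul a₀

lemma hasDerivAt_boundaryMode (k x : ℝ) :
    HasDerivAt (fun x => k * (1 - cos x) * (4 * (1 - cos x) + sin x * (sin x - 3 * x)))
      (k * (sin x * (4 * (1 - cos x) + sin x * (sin x - 3 * x))
        + (1 - cos x) * (sin x + 2 * sin x * cos x - 3 * x * cos x))) x := by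
  have h1 : HasDerivAt (fun x => 1 - cos x) (sin x) x := by
    simpa using (hasDerivAt_cos x).const_sub 1
  have h2 : HasDerivAt (fun x => 4 * (1 - cos x) + sin x * (sin x - 3 * x))
      (4 * sin x + (cos x * (sin x - 3 * x) + sin x * (cos x - 3 * 1))) x :=
    (h1.const_mul 4).add
      ((hasDerivAt_sin x).mul ((hasDerivAt_sin x).sub ((hasDerivAt_id' x).const_mul 3)))
  refine ((h1.const_mul k).mul h2).congr_deriv ?_
  ring

lemma boundaryMode_identity {u s c : ℝ} (h : s ^ 2 + c ^ 2 = 1) :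
    ((1 - c) ^ 2 - 3 * s ^ 2) * (4 * (1 - c) + s * (s - 3 * u))
      + 2 * s * (s * (4 * (1 - c) + s * (s - 3 * u)) + (1 - c) * (s + 2 * s * c - 3 * u * c))
      = 2 * (1 - c) ^ 4 := by
  linear_combination (3 * u * s - s ^ 2 - 2 * (1 - c) ^ 2) * h

theorem closed_boundary_mode_general
    (a₀ τc t₁ t₂ δB : ℝ) (ha₀ : 0 < a₀) (η a VB : ℝ → ℝ)
    (hrange : ∀ τ ∈ Ioo t₁ t₂, η τ ∈ Ioo 0 (2 * π))
    (hrel : ∀ τ ∈ Ioo t₁ t₂, τ - τc = a₀ * (η τ - Real.sin (η τ)))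
    (ha : ∀ τ ∈ Ioo t₁ t₂, a τ = a₀ * (1 - Real.cos (η τ)))
    (hVB : ∀ τ ∈ Ioo t₁ t₂,
      VB τ = -(δB / 2) * a₀ ^ 3 * (1 - Real.cos (η τ))
        * (4 * (1 - Real.cos (η τ))
           + Real.sin (η τ) * (Real.sin (η τ) - 3 * η τ))) :
    ∀ τ ∈ Ioo t₁ t₂,
      -(a τ) * δB = (1 / (a τ) ^ 2 - 3 * (deriv a τ / a τ) ^ 2) * VB τ
           + 2 * (deriv a τ / a τ) * deriv VB τ := by
  intro τ hτ
  have hU : Ioo t₁ t₂ ∈ 𝓝 τ := isOpen_Ioo.mem_nhds hτ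
  have hc : 0 < 1 - cos (η τ) := sub_pos.2 (cos_lt_one_of_mem_Ioo (hrange τ hτ))
  have hη : HasDerivAt η (a₀ * (1 - cos (η τ)))⁻¹ τ :=
    (hasStrictDerivAt_cycloid a₀ τc (η τ)).hasDerivAt_of_rightInvOn (by positivity) hU
      (isOpen_Ioo.mem_nhds (hrange τ hτ)) (injOn_cycloid ha₀.ne' τc) hrange
      fun τ' h => by linarith [hrel τ' h]
  have hda := ((hasDerivAt_dustScale a₀ (η τ)).comp τ hη).congr_of_eventuallyEq
    (eventuallyEq_of_mem hU ha)
  have hdVB := ((hasDerivAt_boundaryMode (-(δB / 2) * a₀ ^ 3) (η τ)).comp τ hη)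
    |>.congr_of_eventuallyEq (eventuallyEq_of_mem hU hVB)
  rw [hda.deriv, hdVB.deriv, ha τ hτ, hVB τ hτ]
  have key := boundaryMode_identity (u := η τ) (sin_sq_add_cos_sq (η τ))
  field_simp [ha₀.ne', hc.ne']
  linear_combination δB * key

/-- For the closed dust FLRW solution, the boundary-effect mode
`δV_B = −(δB/2) a₀³ (1 − cos η)(4(1 − cos η) + sin η (sin η − 3η))`
satisfies, as a function of `τ`,
`−a δB = (1/a² − 3(ȧ/a)²) δV_B + 2(ȧ/a) δV̇_B`. -/
theorem closed_boundary_mode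
    (a₀ τc t₁ t₂ δB : ℝ) (ha₀ : 0 < a₀) (η a VB : ℝ → ℝ)
    (hrange : ∀ τ ∈ Ioo t₁ t₂, η τ ∈ Ioo 0 (2 * π))
    (hsin : ∀ τ ∈ Ioo t₁ t₂, Real.sin (η τ) ≠ 0)
    (hrel : ∀ τ ∈ Ioo t₁ t₂, τ - τc = a₀ * (η τ - Real.sin (η τ)))
    (ha : ∀ τ ∈ Ioo t₁ t₂, a τ = a₀ * (1 - Real.cos (η τ)))
    (hVB : ∀ τ ∈ Ioo t₁ t₂,
      VB τ = -(δB / 2) * a₀ ^ 3 * (1 - Real.cos (η τ))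
        * (4 * (1 - Real.cos (η τ))
           + Real.sin (η τ) * (Real.sin (η τ) - 3 * η τ))) :
    ∀ τ ∈ Ioo t₁ t₂,
      -(a τ) * δB = (1 / (a τ) ^ 2 - 3 * (deriv a τ / a τ) ^ 2) * VB τ
           + 2 * (deriv a τ / a τ) * deriv VB τ :=
  closed_boundary_mode_general a₀ τc t₁ t₂ δB ha₀ η a VB hrange hrel ha hVB
end

section
/- Suppose f : ℝ → ℝ satisfies δE = (−3(ȧ/a)²)f + 2(ȧ/a)ḟ with a(τ) = a₀(τ−τ_c)^{2/3} on (τ_c, ∞), where δE is a constant. If additionally f(τ)/(τ−τ_c)² → 0 as τ → ∞ and f(τ)/(τ−τ_c) → 0 as τ → τ_c⁺, then δE = 0 and f ≡ 0. -/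
open Real Set Filter Topology

/-!
For `a = a₀ (τ - τc)^(2/3)` the Hubble rate is `ȧ/a = 2 / (3 (τ - τc))`, so the equation becomes
the linear ODE `ḟ = f / (τ - τc) + (3/4) δE (τ - τc)`. Since `(f / (τ - τc))' = (3/4) δE` along
solutions, they are exactly `f = C (τ - τc) + (3/4) δE (τ - τc)²`. The decay of `f / (τ - τc)²`
at infinity forces `δE = 0`, and the decay of `f / (τ - τc)` at `τc` then forces `C = 0`.
-/

theorem logDeriv_const_mul_sub_rpow {a c p x : ℝ} (ha : a ≠ 0) (hx : c < x) :
    logDeriv (fun s => a * (s - c) ^ p) x = p / (x - c) := by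
  have hpos : 0 < x - c := sub_pos.mpr hx
  have hderiv : HasDerivAt (fun s => (s - c) ^ p) (p * (x - c) ^ (p - 1)) x := by
    simpa using ((hasDerivAt_id x).sub_const c).rpow_const (p := p) (.inl hpos.ne')
  rw [logDeriv_const_mul x a ha, logDeriv_apply, hderiv.deriv, rpow_sub_one hpos.ne']
  field_simp [(rpow_pos_of_pos hpos p).ne']

theorem exists_eq_mul_add_mul_sq_of_hasDerivAt {f f' : ℝ → ℝ} {τc c : ℝ}
    (hf : ∀ τ ∈ Ioi τc, HasDerivAt f (f' τ) τ)
    (hode : ∀ τ ∈ Ioi τc, f' τ = f τ / (τ - τc) + c * (τ - τc)) :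
    ∃ C, ∀ τ ∈ Ioi τc, f τ = C * (τ - τc) + c * (τ - τc) ^ 2 := by
  set g : ℝ → ℝ := fun τ => f τ / (τ - τc) - c * (τ - τc)
  have hg : ∀ τ ∈ Ioi τc, HasDerivAt g 0 τ := by
    intro τ hτ
    have hpos : 0 < τ - τc := sub_pos.mpr hτ
    have hx : HasDerivAt (fun s : ℝ => s - τc) 1 τ := (hasDerivAt_id τ).sub_const τc
    refine (((hf τ hτ).div hx hpos.ne').sub (hx.const_mul c)).congr_deriv ?_
    rw [hode τ hτ]
    field_simp
    ring
  obtain ⟨C, hC⟩ := isOpen_Ioi.exists_is_const_of_deriv_eq_zero isPreconnected_Ioi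
    (fun τ hτ => (hg τ hτ).differentiableAt.differentiableWithinAt)
    (fun τ hτ => (hg τ hτ).deriv)
  refine ⟨C, fun τ hτ => ?_⟩
  have hpos : 0 < τ - τc := sub_pos.mpr hτ
  have hgτ := hC τ hτ
  simp only [g] at hgτ
  field_simp at hgτ
  linear_combination hgτ

section Asymptotics

variable {f : ℝ → ℝ} {τc C c : ℝ}

theorem tendsto_div_sq_atTop_of_eq_mul_add_mul_sq
    (hf : ∀ τ ∈ Ioi τc, f τ = C * (τ - τc) + c * (τ - τc) ^ 2) :
    Tendsto (fun τ => f τ / (τ - τc) ^ 2) atTop (𝓝 c) := by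
  have hx : Tendsto (fun τ : ℝ => τ - τc) atTop atTop :=
    tendsto_atTop_add_const_right _ _ tendsto_id
  have hlim : Tendsto (fun τ => C / (τ - τc) + c) atTop (𝓝 (0 + c)) :=
    (tendsto_const_nhds.div_atTop hx).add tendsto_const_nhds
  rw [zero_add] at hlim
  refine hlim.congr' ?_
  filter_upwards [eventually_gt_atTop τc] with τ hτ
  have hpos : 0 < τ - τc := sub_pos.mpr hτ
  rw [hf τ hτ]
  field_simp

theorem tendsto_div_nhdsGT_of_eq_mul_add_mul_sq
    (hf : ∀ τ ∈ Ioi τc, f τ = C * (τ - τc) + c * (τ - τc) ^ 2) :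
    Tendsto (fun τ => f τ / (τ - τc)) (𝓝[>] τc) (𝓝 C) := by
  have hlim : Tendsto (fun τ => C + c * (τ - τc)) (𝓝[>] τc) (𝓝 (C + c * (τc - τc))) :=
    (Continuous.tendsto (by fun_prop) τc).mono_left nhdsWithin_le_nhds
  rw [sub_self, mul_zero, add_zero] at hlim
  refine hlim.congr' ?_
  filter_upwards [self_mem_nhdsWithin] with τ hτ
  have hpos : 0 < τ - τc := sub_pos.mpr hτ
  rw [hf τ hτ]
  field_simp

end Asymptotics

/-- If `f` solves `δE = (−3(ȧ/a)²) f + 2(ȧ/a) ḟ` on `(τ_c, ∞)`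
with `a = a₀(τ−τ_c)^(2/3)`, and `f/(τ−τ_c)² → 0` at `∞` and
`f/(τ−τ_c) → 0` as `τ → τ_c⁺`, then `δE = 0` and `f ≡ 0`. -/
theorem flat_critical_point
    (a₀ τc δE : ℝ) (ha₀ : 0 < a₀) (f f' : ℝ → ℝ)
    (hf : ∀ τ ∈ Ioi τc, HasDerivAt f (f' τ) τ)
    (hode : ∀ τ ∈ Ioi τc,
      δE = (-3 * (deriv (fun s => a₀ * (s - τc) ^ ((2 : ℝ) / 3)) τ
              / (a₀ * (τ - τc) ^ ((2 : ℝ) / 3))) ^ 2) * f τ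
            + 2 * (deriv (fun s => a₀ * (s - τc) ^ ((2 : ℝ) / 3)) τ
              / (a₀ * (τ - τc) ^ ((2 : ℝ) / 3))) * f' τ)
    (hlim_top : Tendsto (fun τ => f τ / (τ - τc) ^ 2) atTop (nhds 0))
    (hlim_bot : Tendsto (fun τ => f τ / (τ - τc)) (nhdsWithin τc (Ioi τc))
      (nhds 0)) :
    δE = 0 ∧ ∀ τ ∈ Ioi τc, f τ = 0 := by
  have hlinear : ∀ τ ∈ Ioi τc, f' τ = f τ / (τ - τc) + 3 / 4 * δE * (τ - τc) := by
    intro τ hτ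
    have hpos : 0 < τ - τc := sub_pos.mpr hτ
    have h := hode τ hτ
    simp only [← logDeriv_apply, logDeriv_const_mul_sub_rpow ha₀.ne' hτ] at h
    field_simp at h ⊢
    linear_combination -h
  obtain ⟨C, hsol⟩ := exists_eq_mul_add_mul_sq_of_hasDerivAt hf hlinear
  have hc : 3 / 4 * δE = 0 :=
    tendsto_nhds_unique (tendsto_div_sq_atTop_of_eq_mul_add_mul_sq hsol) hlim_top
  have hC : C = 0 :=
    tendsto_nhds_unique (tendsto_div_nhdsGT_of_eq_mul_add_mul_sq hsol) hlim_bot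
  have hδE : δE = 0 := by linarith
  exact ⟨hδE, fun τ hτ => by rw [hsol τ hτ, hC, hδE]; ring⟩
end
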